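/- Let ρ ∈ (1/2, 1). For every natural number k ≥ 1, α(ρ, k+1) > α(ρ, k), where α(ρ,k) = ℓ_ρ(k+1) - ℓ_ρ(k). Consequently the gradients (α(ρ,k), β(ρ,k)) and (α(ρ,k+1), β(ρ,k+1)) of the limit metric on adjacent cones differ, so ψ_ρ fails to be differentiable across each line y = x/(k+1). -/

import Mathlib

noncomputable def ell (ρ x : ℝ) : ℝ := Real.sqrt ((1 - ρ)^2 + (x - (1 - ρ))^2)

noncomputable def alpha (ρ : ℝ) (k : ℕ) : ℝ := ell ρ ((k : ℝ) + 1) - ell ρ (k : ℝ)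

noncomputable def beta (ρ : ℝ) (k : ℕ) : ℝ :=
  ell ρ 1 + (k : ℝ) * (ell ρ (k : ℝ) - ell ρ ((k : ℝ) + 1)) + ell ρ (k : ℝ)

/-! `ell ρ x` is the modulus of `(1 - ρ) + (x - (1 - ρ)) i`, a point moving affinely along the
line `re z = 1 - ρ`, which misses `0` when `ρ ≠ 1`. No two points of that line lie on a common ray
from `0`, so strict convexity of `ℂ` makes `ell ρ` a strictly convex function of `x`, and its unit
increments `alpha ρ k` are strictly increasing. -/

open Set Complex

theorem strictConvexOn_norm_add_smul {E : Type*} [NormedAddCommGroup E] [NormedSpace ℝ E]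
    [StrictConvexSpace ℝ E] {v w : E} (hvw : LinearIndependent ℝ ![v, w]) :
    StrictConvexOn ℝ univ fun t : ℝ => ‖v + t • w‖ := by
  refine ⟨convex_univ, fun x _ y _ hxy a b ha hb hab => ?_⟩
  have hind : LinearIndependent ℝ ![a • (v + x • w), b • (v + y • w)] := by
    simp only [smul_add, smul_smul]
    exact (LinearIndependent.pair_add_smul_add_smul_iff a (a * x) b (b * y)).2
      ⟨hvw, fun h => hxy (by nlinarith [mul_pos ha hb])⟩
  have hray : ¬SameRay ℝ (a • (v + x • w)) (b • (v + y • w)) := fun h =>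
    sameRay_or_sameRay_neg_iff_not_linearIndependent.1 (Or.inl h) hind
  calc ‖v + (a • x + b • y) • w‖ = ‖a • (v + x • w) + b • (v + y • w)‖ := by
        congr 1; linear_combination (norm := module) -hab • v
    _ < ‖a • (v + x • w)‖ + ‖b • (v + y • w)‖ := norm_add_lt_of_not_sameRay hray
    _ = a • ‖v + x • w‖ + b • ‖v + y • w‖ := by
        rw [norm_smul_of_nonneg ha.le, norm_smul_of_nonneg hb.le]; rfl

theorem norm_ofReal_add_smul_I (c t : ℝ) : ‖(c : ℂ) + t • I‖ = √(c ^ 2 + t ^ 2) := by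
  rw [Complex.real_smul, norm_add_mul_I]

theorem linearIndependent_ofReal_I {c : ℝ} (hc : c ≠ 0) : LinearIndependent ℝ ![(c : ℂ), I] := by
  refine LinearIndependent.pair_iff.2 fun s t h => ?_
  have hre := congrArg Complex.re h
  have him := congrArg Complex.im h
  simp only [Complex.real_smul, add_re, mul_re, ofReal_re, ofReal_im, I_re, I_im, zero_re,
    add_im, mul_im, zero_im] at hre him
  exact ⟨by simpa [hc] using hre, by simpa using him⟩

theorem ell_eq_norm (ρ x : ℝ) : ell ρ x = ‖((1 - ρ : ℝ) : ℂ) + (x - (1 - ρ)) • I‖ := by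
  rw [ell, norm_ofReal_add_smul_I]

theorem strictConvexOn_ell {ρ : ℝ} (hρ : ρ ≠ 1) : StrictConvexOn ℝ univ (ell ρ) := by
  have h := (strictConvexOn_norm_add_smul
    (linearIndependent_ofReal_I (sub_ne_zero.2 hρ.symm))).translate_right (-(1 - ρ))
  rw [preimage_univ] at h
  exact h.congr fun x _ => by rw [ell_eq_norm, Function.comp_apply, neg_add_eq_sub]

theorem alpha_lt_alpha_succ {ρ : ℝ} (hρ : ρ ≠ 1) (k : ℕ) : alpha ρ k < alpha ρ (k + 1) := by
  have h := (strictConvexOn_ell hρ).slope_strict_mono_adjacent (mem_univ _) (mem_univ _)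
    (lt_add_one (k : ℝ)) (lt_add_one ((k : ℝ) + 1))
  simp only [add_sub_cancel_left, div_one] at h
  rw [alpha, alpha]
  push_cast
  exact h

theorem gradient_jump_general (ρ : ℝ) (hρ : ρ ∈ Set.Ioo (1/2 : ℝ) 1)
    (k : ℕ) :
    alpha ρ (k + 1) > alpha ρ k ∧
      (alpha ρ k, beta ρ k) ≠ (alpha ρ (k + 1), beta ρ (k + 1)) := by
  have h := alpha_lt_alpha_succ hρ.2.ne k
  exact ⟨h, fun heq => h.ne (congrArg Prod.fst heq)⟩

theorem gradient_jump (ρ : ℝ) (hρ : ρ ∈ Set.Ioo (1/2 : ℝ) 1)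
    (k : ℕ) (hk : 1 ≤ k) :
    alpha ρ (k + 1) > alpha ρ k ∧
      (alpha ρ k, beta ρ k) ≠ (alpha ρ (k + 1), beta ρ (k + 1)) :=
  gradient_jump_general ρ hρ k
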